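/- For every tuple x ∈ A^{m^{2^n}+1}, the value f(x) occurs among the coordinates of x. Consequently, f is compatible with every unary relation X ⊆ A, i.e., f maps X^{m^{2^n}+1} into X for every X ⊆ A. -/

import Mathlib

/- The universe `A = {a, 0, 1, ..., n}` of size `n+2` is encoded as `Fin (n+2)`,
where `a` is encoded as `0` and the element `i ∈ {0, ..., n}` is encoded as `i+1`. -/

/-- `L_r(x)`: the number of coordinates of `x` whose value is strictly less than
the element `r` in the order `a < 0 < 1 < ⋯ < n` (encoded: value `< r + 1`);
for `r = n+1` this counts all coordinates. -/
def Lcnt (n : ℕ) {K : ℕ} (x : Fin K → Fin (n + 2)) (r : ℕ) : ℕ :=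
  (Finset.univ.filter (fun q => (x q).val < r + 1)).card

/-- `F_x = {r ∈ {0, …, n} : L_{r+1}(x) > m^(2^r) · L_r(x)}`. -/
def FsetA (n m : ℕ) {K : ℕ} (x : Fin K → Fin (n + 2)) : Finset ℕ :=
  (Finset.range (n + 1)).filter (fun r => m ^ 2 ^ r * Lcnt n x r < Lcnt n x (r + 1))

/-- The operation `f : A^(m^(2^n)+1) → A`: `f(x) = max F_x` if `F_x ≠ ∅` (the
element `max F_x`, encoded as `max F_x + 1`), and `f(x) = a` otherwise. -/
def fop (n m : ℕ) (x : Fin (m ^ 2 ^ n + 1) → Fin (n + 2)) : Fin (n + 2) :=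
  if h : (FsetA n m x).Nonempty then
    ⟨(FsetA n m x).max' h + 1, by
      have hmem := (FsetA n m x).max'_mem h
      have h2 : (FsetA n m x).max' h < n + 1 :=
        Finset.mem_range.mp (Finset.mem_filter.mp hmem).1
      omega⟩
  else 0

/-!
If `r ∈ F_x` then `L_{r+1}(x) > m^{2^r} L_r(x) ≥ L_r(x)`, so some coordinate of `x` equals `r`;
in particular this holds for `r = max F_x`. If `F_x = ∅`, then `L_{r+1}(x) ≤ m^{2^r} L_r(x)`
for every `r ≤ n`, so `L_0(x) = 0` would propagate up to `L_{n+1}(x) = 0`, whereas `L_{n+1}(x)`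
counts all coordinates; hence `L_0(x) > 0`, i.e. some coordinate equals `a`.
-/

section Counts

variable {n K : ℕ} (x : Fin K → Fin (n + 2))

theorem Lcnt_top : Lcnt n x (n + 1) = K := by
  rw [Lcnt, Finset.filter_true_of_mem fun q _ => (x q).is_lt, Finset.card_univ, Fintype.card_fin]

theorem exists_val_eq_of_Lcnt_lt_Lcnt_succ {r : ℕ} (h : Lcnt n x r < Lcnt n x (r + 1)) :
    ∃ q, (x q).val = r + 1 := by
  by_contra! hne
  refine h.not_ge (Finset.card_le_card fun q hq => ?_)
  simp only [Finset.mem_filter, Finset.mem_univ, true_and] at hq ⊢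
  have := hne q
  omega

theorem exists_eq_zero_of_Lcnt_zero_pos (h : 0 < Lcnt n x 0) : ∃ q, x q = 0 := by
  obtain ⟨q, hq⟩ := Finset.card_pos.mp h
  simp only [Finset.mem_filter, Finset.mem_univ, true_and] at hq
  exact ⟨q, Fin.ext (by rw [Fin.val_zero]; omega)⟩

variable {m : ℕ}

theorem Lcnt_lt_Lcnt_succ_of_mem_FsetA (hm : 0 < m) {r : ℕ} (hr : r ∈ FsetA n m x) :
    Lcnt n x r < Lcnt n x (r + 1) := by
  simp only [FsetA, Finset.mem_filter] at hr
  exact (Nat.le_mul_of_pos_left _ (Nat.pow_pos hm)).trans_lt hr.2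

theorem Lcnt_zero_pos_of_FsetA_eq_empty (hK : 0 < K) (hF : FsetA n m x = ∅) :
    0 < Lcnt n x 0 := by
  have hstep : ∀ r ≤ n, Lcnt n x (r + 1) ≤ m ^ 2 ^ r * Lcnt n x r := fun r hr => by
    by_contra! hlt
    have hmem : r ∈ FsetA n m x := by
      simp only [FsetA, Finset.mem_filter, Finset.mem_range]
      exact ⟨by omega, hlt⟩
    simp [hF] at hmem
  by_contra! h0
  have hzero : ∀ r ≤ n + 1, Lcnt n x r = 0 := by
    intro r hr
    induction r with
    | zero => omega
    | succ k ih =>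
      have := hstep k (by omega)
      rw [ih (by omega), Nat.mul_zero] at this
      omega
  have := hzero (n + 1) le_rfl
  rw [Lcnt_top] at this
  omega

end Counts

theorem exists_apply_eq_fop {n m : ℕ} (hm : 0 < m) (x : Fin (m ^ 2 ^ n + 1) → Fin (n + 2)) :
    ∃ q, x q = fop n m x := by
  unfold fop
  split_ifs with hF
  · obtain ⟨q, hq⟩ := exists_val_eq_of_Lcnt_lt_Lcnt_succ x
      (Lcnt_lt_Lcnt_succ_of_mem_FsetA x hm ((FsetA n m x).max'_mem hF))
    exact ⟨q, Fin.ext hq⟩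
  · exact exists_eq_zero_of_Lcnt_zero_pos x
      (Lcnt_zero_pos_of_FsetA_eq_empty x (Nat.succ_pos _) (Finset.not_nonempty_iff_eq_empty.mp hF))

/-- The value `f(x)` occurs among the coordinates of `x`; consequently `f` is
compatible with every unary relation `X ⊆ A`. -/
theorem stmt10 (n m : ℕ) (hm : 2 ≤ m) :
    (∀ x : Fin (m ^ 2 ^ n + 1) → Fin (n + 2), ∃ q, x q = fop n m x) ∧
    (∀ X : Set (Fin (n + 2)), ∀ x : Fin (m ^ 2 ^ n + 1) → Fin (n + 2),
      (∀ q, x q ∈ X) → fop n m x ∈ X) := by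
  have hmem : ∀ x : Fin (m ^ 2 ^ n + 1) → Fin (n + 2), ∃ q, x q = fop n m x :=
    exists_apply_eq_fop (by omega)
  refine ⟨hmem, fun X x hX => ?_⟩
  obtain ⟨q, hq⟩ := hmem x
  exact hq ▸ hX q
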